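/- arXiv:1103.2829 — 7 statements merged into one kernel-verified Lean document; each statement's English description precedes it below -/
import Mathlib

section
/- If A is an n×n row-stochastic nonnegative matrix with strictly positive diagonal entries whose associated digraph G (with an edge i→j iff A_{ij}>0) has the property that from every node there is a directed path to a node in some sink strongly connected component, and Θ is the principal submatrix of A indexed by the nodes not belonging to any sink strongly connected component, then for every row index k of Θ there exists a positive integer p such that the k-th row sum of Θ^p is strictly less than 1. -/
open Filter Matrix Finset

/-- For a row-stochastic nonnegative matrix `A` with positive diagonal,
whose digraph (edge `i → j` iff `A i j > 0`) is such that every node reaches a node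
in a sink strongly connected component (here characterized as an *essential* node:
every node it reaches, reaches it back), the principal submatrix `Θ` indexed by the
non-essential (open-minded) nodes has, for every row `k`, some power `p ≥ 1` whose
`k`-th row sum is strictly less than `1`. -/
theorem stmt0 {n : ℕ} (A : Matrix (Fin n) (Fin n) ℝ)
    (hnn : ∀ i j, 0 ≤ A i j)
    (hrow : ∀ i, ∑ j, A i j = 1)
    (hdiag : ∀ i, 0 < A i i)
    (ess : Fin n → Prop) [DecidablePred ess]
    (hess : ∀ i, ess i ↔
      (∀ k, Relation.ReflTransGen (fun a b => 0 < A a b) i k →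
        Relation.ReflTransGen (fun a b => 0 < A a b) k i))
    (hreach : ∀ i, ∃ j, ess j ∧ Relation.ReflTransGen (fun a b => 0 < A a b) i j)
    (Θ : Matrix {i : Fin n // ¬ ess i} {i : Fin n // ¬ ess i} ℝ)
    (hΘ : ∀ i j, Θ i j = A i.1 j.1) :
    ∀ k : {i : Fin n // ¬ ess i}, ∃ p : ℕ, 0 < p ∧ ∑ j, (Θ ^ p) k j < 1 := by
  -- powers of A are nonnegative
  have hApnn : ∀ p i j, 0 ≤ (A ^ p) i j := by
    intro p
    induction p with
    | zero => intro i j; simp [Matrix.one_apply]; positivity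
    | succ p ih =>
      intro i j
      rw [pow_succ, Matrix.mul_apply]
      exact Finset.sum_nonneg fun m _ => mul_nonneg (ih i m) (hnn m j)
  -- powers of A are row stochastic
  have hAprow : ∀ p i, ∑ j, (A ^ p) i j = 1 := by
    intro p
    induction p with
    | zero => intro i; simp [Matrix.one_apply]
    | succ p ih =>
      intro i
      simp only [pow_succ, Matrix.mul_apply]
      rw [Finset.sum_comm]
      simp only [← Finset.mul_sum, hrow, mul_one]
      exact ih i
  -- Θ powers dominated by A powers
  have hΘle : ∀ p (i j : {i : Fin n // ¬ ess i}), 0 ≤ (Θ ^ p) i j ∧ (Θ ^ p) i j ≤ (A ^ p) i.1 j.1 := by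
    intro p
    induction p with
    | zero =>
      intro i j
      constructor
      · simp [Matrix.one_apply]; positivity
      · simp only [pow_zero, Matrix.one_apply]
        by_cases h : i = j
        · simp [h]
        · have h' : i.1 ≠ j.1 := fun hh => h (Subtype.ext hh)
          simp [h, h']
    | succ p ih =>
      intro i j
      constructor
      · rw [pow_succ, Matrix.mul_apply]
        refine Finset.sum_nonneg fun m _ => mul_nonneg (ih i m).1 ?_
        rw [hΘ]; exact hnn m.1 j.1
      · rw [pow_succ, pow_succ, Matrix.mul_apply, Matrix.mul_apply]
        have h1 : ∑ m : {i : Fin n // ¬ ess i}, (Θ ^ p) i m * Θ m j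
            ≤ ∑ m : {i : Fin n // ¬ ess i}, (A ^ p) i.1 m.1 * A m.1 j.1 := by
          refine Finset.sum_le_sum fun m _ => ?_
          rw [hΘ]
          exact mul_le_mul_of_nonneg_right (ih i m).2 (hnn m.1 j.1)
        refine h1.trans ?_
        have h2 : ∑ m : {i : Fin n // ¬ ess i}, (A ^ p) i.1 m.1 * A m.1 j.1
            = ∑ m ∈ Finset.univ.filter (fun x => ¬ ess x), (A ^ p) i.1 m * A m j.1 := by
          rw [← Finset.sum_subtype_eq_sum_filter, Finset.subtype_univ]
        rw [h2]
        refine Finset.sum_le_sum_of_subset_of_nonneg (Finset.filter_subset _ _) ?_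
        intro m _ _
        exact mul_nonneg (hApnn p i.1 m) (hnn m j.1)
  -- reachability gives positive power entry
  have hpos : ∀ i j : Fin n, Relation.ReflTransGen (fun a b => 0 < A a b) i j →
      ∃ p, 0 < (A ^ p) i j := by
    intro i j h
    induction h with
    | refl => exact ⟨0, by simp [Matrix.one_apply]⟩
    | tail _ hbc ih =>
      obtain ⟨p, hp⟩ := ih
      rename_i b c _
      refine ⟨p + 1, ?_⟩
      rw [pow_succ, Matrix.mul_apply]
      refine Finset.sum_pos' (fun m _ => mul_nonneg (hApnn p i m) (hnn m c)) ?_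
      exact ⟨b, Finset.mem_univ b, mul_pos hp hbc⟩
  intro k
  obtain ⟨j, hjess, hjreach⟩ := hreach k.1
  obtain ⟨p, hp⟩ := hpos k.1 j hjreach
  have hpne : p ≠ 0 := by
    rintro rfl
    simp only [pow_zero, Matrix.one_apply] at hp
    by_cases h : k.1 = j
    · exact k.2 (h ▸ hjess)
    · simp [h] at hp
  refine ⟨p, Nat.pos_of_ne_zero hpne, ?_⟩
  have h1 : ∑ m : {i : Fin n // ¬ ess i}, (Θ ^ p) k m
      ≤ ∑ m ∈ Finset.univ.filter (fun x => ¬ ess x), (A ^ p) k.1 m := by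
    rw [← Finset.sum_subtype_eq_sum_filter, Finset.subtype_univ]
    exact Finset.sum_le_sum fun m _ => (hΘle p k m).2
  refine h1.trans_lt ?_
  have hsplit := Finset.sum_filter_add_sum_filter_not Finset.univ (fun x => ess x) ((A ^ p) k.1)
  rw [hAprow p k.1] at hsplit
  have hpos2 : 0 < ∑ m ∈ Finset.univ.filter (fun x => ess x), (A ^ p) k.1 m := by
    refine Finset.sum_pos' (fun m _ => hApnn p k.1 m) ⟨j, ?_, hp⟩
    simp [hjess]
  linarith
end

section
/- Let Θ be a square nonnegative matrix such that each row sum of Θ is at most 1 and for every row index k there exists p_k ∈ ℕ with the k-th row sum of Θ^{p_k} strictly less than 1. Then Θ^t → 0 as t → ∞; equivalently, the spectral radius of Θ is strictly less than 1. -/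
/-!
Nonnegativity and row sums at most `1` make every row sum of `Θ ^ t` antitone in `t`, so a
single exponent `N > 0` makes all row sums of `Θ ^ N` less than `1`. For a nonnegative matrix the
`L∞` operator norm is its largest row sum, so `‖Θ ^ N‖ < 1`, and in any normed ring a power of
norm less than `1` forces `Θ ^ t → 0`.
-/

open Filter Matrix Finset Topology

theorem tendsto_pow_atTop_nhds_zero_of_norm_pow_lt_one {R : Type*} [SeminormedRing R] {a : R}
    {N : ℕ} (hN : 0 < N) (ha : ‖a ^ N‖ < 1) : Tendsto (fun t ↦ a ^ t) atTop (𝓝 0) := by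
  have hdecay : Tendsto (fun t ↦ ‖(a ^ N) ^ (t / N)‖ * ∑ r ∈ range N, ‖a ^ r‖) atTop (𝓝 0) := by
    simpa using ((tendsto_pow_atTop_nhds_zero_of_norm_lt_one ha).comp
      (Nat.tendsto_div_const_atTop hN.ne')).norm.mul_const (∑ r ∈ range N, ‖a ^ r‖)
  refine squeeze_zero_norm (fun t ↦ ?_) hdecay
  calc ‖a ^ t‖ = ‖(a ^ N) ^ (t / N) * a ^ (t % N)‖ := by
        rw [← pow_mul, ← pow_add, Nat.div_add_mod]
    _ ≤ ‖(a ^ N) ^ (t / N)‖ * ‖a ^ (t % N)‖ := norm_mul_le _ _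
    _ ≤ ‖(a ^ N) ^ (t / N)‖ * ∑ r ∈ range N, ‖a ^ r‖ := by
      gcongr
      exact single_le_sum (f := fun r ↦ ‖a ^ r‖) (fun _ _ ↦ norm_nonneg _)
        (mem_range.2 (Nat.mod_lt t hN))

namespace Matrix

section OrderedSemiring

variable {l m n R : Type*} [Fintype m] [Fintype n] [Semiring R] [PartialOrder R]
  [IsOrderedRing R]

theorem sum_mul_apply_le {A : Matrix l m R} {B : Matrix m n R} (hA : ∀ i j, 0 ≤ A i j)
    (hB : ∀ i, ∑ j, B i j ≤ 1) (i : l) : ∑ j, (A * B) i j ≤ ∑ j, A i j := by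
  simp_rw [mul_apply]
  rw [sum_comm]
  simp_rw [← mul_sum]
  exact sum_le_sum fun k _ ↦ mul_le_of_le_one_right (hA i k) (hB k)

variable [DecidableEq n] {A : Matrix n n R}

theorem antitone_sum_pow_apply (hA : ∀ i j, 0 ≤ A i j) (hrow : ∀ i, ∑ j, A i j ≤ 1) (i : n) :
    Antitone fun t ↦ ∑ j, (A ^ t) i j :=
  antitone_nat_of_succ_le fun t ↦ by
    rw [pow_succ]
    exact sum_mul_apply_le (pow_apply_nonneg hA t) hrow i

theorem eventually_forall_sum_pow_apply_lt_one (hA : ∀ i j, 0 ≤ A i j)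
    (hrow : ∀ i, ∑ j, A i j ≤ 1) (hsub : ∀ k, ∃ p : ℕ, ∑ j, (A ^ p) k j < 1) :
    ∀ᶠ N in atTop, ∀ k, ∑ j, (A ^ N) k j < 1 :=
  eventually_all.2 fun k ↦ (hsub k).elim fun p hp ↦
    eventually_atTop.2 ⟨p, fun _ hN ↦ (antitone_sum_pow_apply hA hrow k hN).trans_lt hp⟩

end OrderedSemiring

section LinftyOp

open scoped Norms.Operator

theorem linfty_opNorm_lt_one_of_nonneg {m n : Type*} [Fintype m] [Fintype n]
    {A : Matrix m n ℝ} (hA : ∀ i j, 0 ≤ A i j) (hrow : ∀ i, ∑ j, A i j < 1) : ‖A‖ < 1 := by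
  rw [linfty_opNorm_def, ← NNReal.coe_one, NNReal.coe_lt_coe, Finset.sup_lt_iff zero_lt_one]
  intro i _
  rw [← NNReal.coe_lt_coe, NNReal.coe_sum]
  simpa [Real.norm_of_nonneg (hA i _)] using hrow i

theorem tendsto_pow_atTop_nhds_zero_of_sum_pow_apply_lt_one {n : Type*} [Fintype n]
    [DecidableEq n] {A : Matrix n n ℝ} (hA : ∀ i j, 0 ≤ A i j) {N : ℕ} (hN : 0 < N)
    (hrow : ∀ i, ∑ j, (A ^ N) i j < 1) : Tendsto (fun t ↦ A ^ t) atTop (𝓝 0) :=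
  tendsto_pow_atTop_nhds_zero_of_norm_pow_lt_one hN
    (linfty_opNorm_lt_one_of_nonneg (pow_apply_nonneg hA N) hrow)

end LinftyOp

end Matrix

/-- If `Θ` is a square nonnegative matrix with row sums at most `1`,
and for every row `k` there is a power `p` whose `k`-th row sum is strictly less
than `1`, then `Θ ^ t → 0` entrywise as `t → ∞`. -/
theorem stmt1 {m : ℕ} (Θ : Matrix (Fin m) (Fin m) ℝ)
    (hnn : ∀ i j, 0 ≤ Θ i j)
    (hrow : ∀ i, ∑ j, Θ i j ≤ 1)
    (hsub : ∀ k, ∃ p : ℕ, ∑ j, (Θ ^ p) k j < 1) :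
    ∀ i j, Tendsto (fun t => (Θ ^ t) i j) atTop (nhds 0) := by
  obtain ⟨N, hNrow, hN⟩ :=
    ((eventually_forall_sum_pow_apply_lt_one hnn hrow hsub).and (eventually_gt_atTop 0)).exists
  have hlim := tendsto_pow_atTop_nhds_zero_of_sum_pow_apply_lt_one hnn hN hNrow
  exact fun i j ↦ tendsto_pi_nhds.1 (tendsto_pi_nhds.1 hlim i) j
end

section
/- Let A be a block lower triangular matrix of the form A = [[C, 0, 0], [0, M, 0], [Θ_C, Θ_M, Θ]] where C is idempotent (C² = C), M^t converges to a limit M* as t → ∞, and the spectral radius of Θ is strictly less than 1. Then A^t converges as t → ∞ to [[C, 0, 0], [0, M*, 0], [(I−Θ)^{-1}Θ_C C, (I−Θ)^{-1}Θ_M M*, 0]]. -/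
/-!
`A` is block lower triangular over `B = diag(C, M)`, so `A ^ t` has diagonal blocks `B ^ t`, `Θ ^ t`
and lower-left block `∑_{k<t} Θ ^ k L B ^ (t-1-k)`, where `L = [Θ_C, Θ_M]`. By Gelfand's formula
the spectral radius bound makes `‖Θ ^ k‖` summable, so `Θ ^ t → 0` and `∑ Θ ^ k = (I - Θ)⁻¹`;
dominated convergence then sends the convolution to `(I - Θ)⁻¹ L B*`, where `B* = diag(C, M*)`
because `C ^ t = C` for `t ≥ 1`.
-/

open Filter Matrix Finset Topology

theorem summable_norm_pow_of_spectralRadius_lt_one {A : Type*} [NormedRing A]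
    [NormedAlgebra ℂ A] [CompleteSpace A] {a : A} (ha : spectralRadius ℂ a < 1) :
    Summable (‖a ^ ·‖) := by
  obtain ⟨r, hρr, hr1⟩ := ENNReal.lt_iff_exists_nnreal_btwn.mp ha
  have hpow : ∀ᶠ n in atTop, ‖‖a ^ n‖‖ ≤ (r : ℝ) ^ n := by
    filter_upwards [(spectrum.pow_norm_pow_one_div_tendsto_nhds_spectralRadius a).eventually_lt_const
      hρr, eventually_ne_atTop 0] with n hn hn0
    rw [ENNReal.ofReal_lt_coe_iff (by positivity), one_div] at hn
    rw [norm_norm, ← Real.rpow_inv_natCast_pow (norm_nonneg (a ^ n)) hn0]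
    exact pow_le_pow_left₀ (by positivity) hn.le n
  exact .of_norm_bounded_eventually_nat
    (summable_geometric_of_lt_one r.2 (by exact_mod_cast hr1)) hpow

theorem HasSum.matrix_mul_right {ι α l m n : Type*} [Fintype m] [Semiring α] [TopologicalSpace α]
    [IsTopologicalSemiring α] {f : ι → Matrix l m α} {a : Matrix l m α} (hf : HasSum f a)
    (B : Matrix m n α) : HasSum (f · * B) (a * B) :=
  hf.map (mulRightLinearMap l ℕ B) (continuous_id.matrix_mul continuous_const)

namespace Matrix

theorem tendsto_fromBlocks {α ι l m n o : Type*} [TopologicalSpace α] {F : Filter ι}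
    {A : ι → Matrix n l α} {B : ι → Matrix n m α} {C : ι → Matrix o l α} {D : ι → Matrix o m α}
    {A₀ B₀ C₀ D₀} (hA : Tendsto A F (𝓝 A₀)) (hB : Tendsto B F (𝓝 B₀)) (hC : Tendsto C F (𝓝 C₀))
    (hD : Tendsto D F (𝓝 D₀)) :
    Tendsto (fun i => fromBlocks (A i) (B i) (C i) (D i)) F (𝓝 (fromBlocks A₀ B₀ C₀ D₀)) := by
  refine tendsto_pi_nhds.2 fun i => tendsto_pi_nhds.2 fun j => ?_
  rcases i with i | i <;> rcases j with j | j
  · exact tendsto_pi_nhds.1 (tendsto_pi_nhds.1 hA i) j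
  · exact tendsto_pi_nhds.1 (tendsto_pi_nhds.1 hB i) j
  · exact tendsto_pi_nhds.1 (tendsto_pi_nhds.1 hC i) j
  · exact tendsto_pi_nhds.1 (tendsto_pi_nhds.1 hD i) j

variable {α l m n : Type*} [Fintype l] [Fintype m] [Fintype n]

theorem fromBlocks_zero₁₂_pow [DecidableEq m] [DecidableEq n] [Semiring α] (B : Matrix m m α)
    (L : Matrix n m α) (D : Matrix n n α) (N : ℕ) :
    fromBlocks B 0 L D ^ N =
      fromBlocks (B ^ N) 0 (∑ k ∈ range N, D ^ k * L * B ^ (N - 1 - k)) (D ^ N) := by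
  induction N with
  | zero => simp [fromBlocks_one]
  | succ N ih =>
    rw [pow_succ', ih, fromBlocks_multiply, sum_range_succ']
    simp only [Matrix.zero_mul, Matrix.mul_zero, add_zero, zero_add, ← pow_succ', pow_zero,
      Matrix.one_mul, Nat.add_sub_cancel, Nat.sub_zero, Matrix.mul_sum, sum_const_zero,
      add_comm (L * B ^ N)]
    congr 2
    refine sum_congr rfl fun k _ => ?_
    rw [pow_succ', Matrix.mul_assoc, Matrix.mul_assoc, Matrix.mul_assoc, Nat.sub_sub, add_comm 1 k]

section LinftyOpNorm

attribute [local instance] Matrix.linftyOpNormedAddCommGroup Matrix.linftyOpNormedRing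
  Matrix.linftyOpNormedAlgebra

/-- The library's `CompleteSpace` instance on matrices is for the product uniformity, which is not
reducibly the one induced by the `L∞`-operator norm. -/
theorem linftyOp_completeSpace [NormedRing α] [CompleteSpace α] :
    @CompleteSpace (Matrix m n α) PseudoMetricSpace.toUniformSpace :=
  inferInstanceAs (CompleteSpace (m → n → α))

attribute [local instance] linftyOp_completeSpace

theorem linfty_opNorm_map_ofReal (A : Matrix m n ℝ) : ‖A.map Complex.ofReal‖ = ‖A‖ := by
  simp [linfty_opNorm_def]

theorem summable_norm_pow_of_forall_isRoot_charpoly [DecidableEq n] {Θ : Matrix n n ℝ}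
    (hΘ : ∀ μ : ℂ, (Θ.map Complex.ofReal).charpoly.IsRoot μ → ‖μ‖ < 1) :
    Summable (‖Θ ^ ·‖) := by
  -- Gelfand's formula needs a nontrivial algebra.
  rcases isEmpty_or_nonempty n with _ | _
  · simp [Subsingleton.elim _ (0 : Matrix n n ℝ)]
  have hρ : spectralRadius ℂ (Θ.map Complex.ofReal) < 1 := by
    simpa using spectrum.spectralRadius_lt_of_forall_lt (r := 1) _ fun μ hμ => by
      exact_mod_cast hΘ μ (mem_spectrum_iff_isRoot_charpoly.1 hμ)
  refine (summable_norm_pow_of_spectralRadius_lt_one hρ).congr fun k => ?_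
  rw [← linfty_opNorm_map_ofReal (Θ ^ k)]
  exact congrArg norm (Matrix.map_pow Θ Complex.ofRealHom k).symm

theorem tendsto_sum_range_mul_of_summable_norm [NormedRing α] [CompleteSpace α]
    {a : ℕ → Matrix l m α} {b : ℕ → Matrix m n α} {b₀ : Matrix m n α} (ha : Summable (‖a ·‖))
    (hb : Tendsto b atTop (𝓝 b₀)) :
    Tendsto (fun N => ∑ k ∈ range N, a k * b (N - 1 - k)) atTop (𝓝 ((∑' k, a k) * b₀)) := by
  obtain ⟨β, hβ⟩ := hb.norm.bddAbove_range
  let f : ℕ → ℕ → Matrix l n α := fun N k => if k < N then a k * b (N - 1 - k) else 0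
  have hf_sum (N : ℕ) : ∑' k, f N k = ∑ k ∈ range N, a k * b (N - 1 - k) := by
    rw [tsum_eq_sum (s := range N) fun k hk => if_neg (by simpa using hk)]
    exact sum_congr rfl fun k hk => if_pos (mem_range.1 hk)
  have hf_lim (k : ℕ) : Tendsto (f · k) atTop (𝓝 (a k * b₀)) := by
    have hshift : Tendsto (fun N => N - 1 - k) atTop atTop :=
      (tendsto_sub_atTop_nat k).comp (tendsto_sub_atTop_nat 1)
    refine (((continuous_const.matrix_mul continuous_id).tendsto b₀).comp
      (hb.comp hshift)).congr' ?_
    filter_upwards [eventually_gt_atTop k] with N hN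
    exact (if_pos hN).symm
  have hf_le (N k : ℕ) : ‖f N k‖ ≤ ‖a k‖ * β := by
    by_cases hk : k < N
    · simp only [f, if_pos hk]
      exact (linfty_opNorm_mul _ _).trans
        (mul_le_mul_of_nonneg_left (hβ ⟨_, rfl⟩) (norm_nonneg _))
    · simp only [f, if_neg hk, norm_zero]
      exact mul_nonneg (norm_nonneg _) ((norm_nonneg _).trans (hβ ⟨0, rfl⟩))
  have hlim : (∑' k, a k) * b₀ = ∑' k, a k * b₀ :=
    (ha.of_norm.hasSum.matrix_mul_right b₀).tsum_eq.symm
  rw [hlim]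
  exact (tendsto_tsum_of_dominated_convergence (ha.mul_right β) hf_lim
    (.of_forall fun N => hf_le N)).congr hf_sum

theorem tendsto_fromBlocks_zero₁₂_pow [NormedCommRing α] [CompleteSpace α] [DecidableEq m]
    [DecidableEq n] {B B₀ : Matrix m m α} (L : Matrix n m α) {Θ : Matrix n n α}
    (hB : Tendsto (B ^ ·) atTop (𝓝 B₀)) (hΘ : Summable (‖Θ ^ ·‖)) :
    Tendsto (fromBlocks B 0 L Θ ^ ·) atTop (𝓝 (fromBlocks B₀ 0 ((1 - Θ)⁻¹ * L * B₀) 0)) := by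
  simp_rw [fromBlocks_zero₁₂_pow]
  refine tendsto_fromBlocks hB tendsto_const_nhds ?_ hΘ.of_norm.tendsto_atTop_zero
  have hL : Summable (‖Θ ^ · * L‖) :=
    (hΘ.mul_right ‖L‖).of_nonneg_of_le (fun _ => norm_nonneg _) fun _ => linfty_opNorm_mul _ _
  have hlim : (1 - Θ)⁻¹ * L = ∑' k, Θ ^ k * L := by
    rw [inv_eq_right_inv hΘ.of_norm.one_sub_mul_tsum_pow]
    exact (hΘ.of_norm.hasSum.matrix_mul_right L).tsum_eq.symm
  rw [hlim]
  exact tendsto_sum_range_mul_of_summable_norm hL hB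

end LinftyOpNorm

end Matrix

/-- For a block lower triangular matrix
`A = [[C, 0, 0], [0, M, 0], [Θ_C, Θ_M, Θ]]` with `C` idempotent, `M ^ t → M*`,
and the spectral radius of `Θ` strictly less than `1` (every complex eigenvalue
of `Θ` has modulus `< 1`), the powers `A ^ t` converge entrywise to
`[[C, 0, 0], [0, M*, 0], [(I − Θ)⁻¹ Θ_C C, (I − Θ)⁻¹ Θ_M M*, 0]]`. -/
theorem stmt3 {a b c : ℕ}
    (C : Matrix (Fin a) (Fin a) ℝ) (M Mstar : Matrix (Fin b) (Fin b) ℝ)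
    (ΘC : Matrix (Fin c) (Fin a) ℝ) (ΘM : Matrix (Fin c) (Fin b) ℝ)
    (Θ : Matrix (Fin c) (Fin c) ℝ)
    (hC : C * C = C)
    (hM : ∀ i j, Tendsto (fun t => (M ^ t) i j) atTop (nhds (Mstar i j)))
    (hΘ : ∀ μ : ℂ, (Θ.map Complex.ofReal).charpoly.IsRoot μ → ‖μ‖ < 1) :
    ∀ i j, Tendsto
      (fun t => ((Matrix.fromBlocks (Matrix.fromBlocks C 0 0 M) 0
        (Matrix.of fun k => Sum.elim (ΘC k) (ΘM k)) Θ) ^ t) i j) atTop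
      (nhds ((Matrix.fromBlocks (Matrix.fromBlocks C 0 0 Mstar) 0
        (Matrix.of fun k => Sum.elim (((1 - Θ)⁻¹ * ΘC * C) k)
          (((1 - Θ)⁻¹ * ΘM * Mstar) k)) 0) i j)) := by
  have hB : Tendsto (fromBlocks C 0 0 M ^ ·) atTop (𝓝 (fromBlocks C 0 0 Mstar)) := by
    simp only [fromBlocks_zero₁₂_pow, Matrix.mul_zero, Matrix.zero_mul, sum_const_zero]
    refine tendsto_fromBlocks (tendsto_const_nhds.congr' ?_) tendsto_const_nhds tendsto_const_nhds
      (tendsto_pi_nhds.2 fun i => tendsto_pi_nhds.2 (hM i))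
    filter_upwards [eventually_ne_atTop 0] with t ht
    exact (IsIdempotentElem.pow_eq hC ht).symm
  have hA := tendsto_fromBlocks_zero₁₂_pow (fromCols ΘC ΘM) hB
    (summable_norm_pow_of_forall_isRoot_charpoly hΘ)
  have hlim : (1 - Θ)⁻¹ * fromCols ΘC ΘM * fromBlocks C 0 0 Mstar =
      fromCols ((1 - Θ)⁻¹ * ΘC * C) ((1 - Θ)⁻¹ * ΘM * Mstar) := by
    simp [Matrix.mul_assoc, mul_fromCols, fromCols_mul_fromBlocks]
  rw [hlim] at hA
  exact fun i j => tendsto_pi_nhds.1 (tendsto_pi_nhds.1 hA i) j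
end

section
/- For any opinion vector y in an SBC or SBI system, if fvct(y) := lim_{t→∞} A(y)^t y exists and the proximity digraphs satisfy G_r(y) = G_r(fvct(y)), then fvct(y) is an equilibrium opinion vector, i.e., A(fvct(y))·fvct(y) = fvct(y). -/
open Filter Matrix Finset

/-- Averaging adjacency matrix of the proximity digraph with bound function `B`
(`B i j = r i` for SBC, `B i j = r j` for SBI): `a i j = 1/|𝒩 i|` if
`|y i − y j| ≤ B i j`, else `0`. -/
noncomputable def adjMat {n : ℕ} (B : Fin n → Fin n → ℝ) (y : Fin n → ℝ) :
    Matrix (Fin n) (Fin n) ℝ :=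
  Matrix.of fun i j =>
    if |y i - y j| ≤ B i j
    then ((Finset.univ.filter (fun k => |y i - y k| ≤ B i k)).card : ℝ)⁻¹
    else 0

theorem adjMat_congr {n : ℕ} {B : Fin n → Fin n → ℝ} {y z : Fin n → ℝ}
    (hG : ∀ i j, |y i - y j| ≤ B i j ↔ |z i - z j| ≤ B i j) :
    adjMat B y = adjMat B z := by
  ext i j
  have hNeighbors : univ.filter (fun k => |y i - y k| ≤ B i k)
      = univ.filter (fun k => |z i - z k| ≤ B i k) :=
    filter_congr fun k _ => hG i k
  simp only [adjMat, of_apply, hNeighbors, hG i j]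

theorem Matrix.pow_mulVec_eq_iterate {n R : Type*} [Fintype n] [DecidableEq n] [Semiring R]
    (A : Matrix n n R) (v : n → R) (t : ℕ) :
    (A ^ t) *ᵥ v = (A *ᵥ ·)^[t] v := by
  induction t with
  | zero => simp
  | succ t ih => rw [pow_succ', ← mulVec_mulVec, ih, Function.iterate_succ_apply']

theorem Matrix.mulVec_eq_self_of_tendsto_pow_mulVec {n R : Type*} [Fintype n] [DecidableEq n]
    [Semiring R] [TopologicalSpace R] [IsTopologicalSemiring R] [T2Space R]
    (A : Matrix n n R) {v f : n → R} (h : Tendsto (fun t => (A ^ t) *ᵥ v) atTop (nhds f)) :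
    A *ᵥ f = f := by
  simp only [pow_mulVec_eq_iterate] at h
  exact isFixedPt_of_tendsto_iterate h (continuous_const.matrix_mulVec continuous_id).continuousAt

theorem stmt4_general {n : ℕ} (B : Fin n → Fin n → ℝ) (y f : Fin n → ℝ)
    (hf : ∀ i, Tendsto (fun t => ((adjMat B y ^ t) *ᵥ y) i) atTop (nhds (f i)))
    (hG : ∀ i j, (|y i - y j| ≤ B i j) ↔ (|f i - f j| ≤ B i j)) :
    adjMat B f *ᵥ f = f := by
  rw [← adjMat_congr hG]
  exact (adjMat B y).mulVec_eq_self_of_tendsto_pow_mulVec (tendsto_pi_nhds.mpr hf)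

/-- In an SBC or SBI system, if `fvct y = lim A(y)^t y` exists and
`G_r(y) = G_r(fvct y)`, then `fvct y` is an equilibrium: `A(fvct y) (fvct y) = fvct y`. -/
theorem stmt4 {n : ℕ} (r : Fin n → ℝ) (B : Fin n → Fin n → ℝ) (y f : Fin n → ℝ)
    (hr : ∀ i, 0 < r i)
    (hB : (∀ i j, B i j = r i) ∨ (∀ i j, B i j = r j))
    (hf : ∀ i, Tendsto (fun t => ((adjMat B y ^ t) *ᵥ y) i) atTop (nhds (f i)))
    (hG : ∀ i j, (|y i - y j| ≤ B i j) ↔ (|f i - f j| ≤ B i j)) :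
    adjMat B f *ᵥ f = f :=
  stmt4_general B y f hf hG
end

section
/- (Sufficient condition for equal topologies.) Let z ∈ ℝ^n be an opinion vector with equi-topology distance ε_i(z) = 0.5·min{ ||z_i − z_j| − R| : j ≠ i, R ∈ {r_i, r_j} }. If y ∈ ℝ^n satisfies |y_i − z_i| < ε_i(z) whenever ε_i(z) > 0 and y_i = z_i whenever ε_i(z) = 0, then the proximity digraphs of y and z coincide: G_r(y) = G_r(z), for both the SBC and SBI definitions of neighbors. -/
open Filter Matrix Finset

/-- Equi-topology distance: `ε i (z) = ½ · min { ||z i − z j| − R| : j ≠ i, R ∈ {r i, r j} }`. -/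
noncomputable def epsDist {n : ℕ} (r z : Fin n → ℝ) (i : Fin n) : ℝ :=
  (1 / 2) * sInf {d : ℝ | ∃ j, j ≠ i ∧
    (d = |(|z i - z j| - r i)| ∨ d = |(|z i - z j| - r j)|)}

lemma epsDist_nonneg {n : ℕ} (r z : Fin n → ℝ) (i : Fin n) : 0 ≤ epsDist r z i := by
  unfold epsDist
  have h : 0 ≤ sInf {d : ℝ | ∃ j, j ≠ i ∧
      (d = |(|z i - z j| - r i)| ∨ d = |(|z i - z j| - r j)|)} := by
    apply Real.sInf_nonneg
    rintro x ⟨j, -, h | h⟩ <;> simp [h, abs_nonneg]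
  linarith

lemma epsDist_le {n : ℕ} (r z : Fin n → ℝ) {i j : Fin n} (hij : j ≠ i) {R : ℝ}
    (hR : R = r i ∨ R = r j) : 2 * epsDist r z i ≤ |(|z i - z j| - R)| := by
  have hmem : |(|z i - z j| - R)| ∈ {d : ℝ | ∃ j, j ≠ i ∧
      (d = |(|z i - z j| - r i)| ∨ d = |(|z i - z j| - r j)|)} := by
    exact ⟨j, hij, by rcases hR with h | h <;> simp [h]⟩
  have hbdd : BddBelow {d : ℝ | ∃ j, j ≠ i ∧
      (d = |(|z i - z j| - r i)| ∨ d = |(|z i - z j| - r j)|)} := by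
    refine ⟨0, ?_⟩
    rintro x ⟨k, -, h | h⟩ <;> simp [h, abs_nonneg]
  have := csInf_le hbdd hmem
  unfold epsDist
  linarith

/-- Sufficient condition for equal topologies: if `y` lies in the
equi-topology neighborhood of `z` (entrywise: `|y i − z i| < ε i (z)` when
`ε i (z) > 0`, and `y i = z i` when `ε i (z) = 0`), then the SBC (resp. SBI)
proximity digraphs of `y` and `z` coincide. -/
theorem stmt7 {n : ℕ} (r : Fin n → ℝ) (B : Fin n → Fin n → ℝ) (y z : Fin n → ℝ)
    (hr : ∀ i, 0 < r i)
    (hB : (∀ i j, B i j = r i) ∨ (∀ i j, B i j = r j))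
    (hy : ∀ i, (0 < epsDist r z i → |y i - z i| < epsDist r z i) ∧
               (epsDist r z i = 0 → y i = z i)) :
    ∀ i j, (|y i - y j| ≤ B i j) ↔ (|z i - z j| ≤ B i j) := by
  -- pointwise bound
  have hle : ∀ i, |y i - z i| ≤ epsDist r z i := by
    intro i
    rcases (epsDist_nonneg r z i).eq_or_lt with h | h
    · rw [(hy i).2 h.symm]; simp [← h]
    · exact ((hy i).1 h).le
  intro i j
  rcases eq_or_ne i j with rfl | hij
  · simp
  have hij' : j ≠ i := hij.symm
  set d := |(|z i - z j| - B i j)| with hd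
  have hBij : B i j = r i ∨ B i j = r j := by
    rcases hB with h | h
    · exact Or.inl (h i j)
    · exact Or.inr (h i j)
  have h2i : 2 * epsDist r z i ≤ d := epsDist_le r z hij' hBij
  have h2j : 2 * epsDist r z j ≤ d := by
    have : |(|z j - z i| - B i j)| = d := by rw [hd, abs_sub_comm (z j) (z i)]
    rw [← this]
    exact epsDist_le r z hij (hBij.symm.imp id id)
  have hεi := epsDist_nonneg r z i
  have hεj := epsDist_nonneg r z j
  rcases (abs_nonneg (|z i - z j| - B i j)).eq_or_lt with hd0 | hd0
  · -- d = 0 : both y's equal z's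
    have hd0' : d = 0 := by rw [hd, ← hd0]
    have hei : epsDist r z i = 0 := le_antisymm (by linarith) hεi
    have hej : epsDist r z j = 0 := le_antisymm (by linarith) hεj
    rw [(hy i).2 hei, (hy j).2 hej]
  · -- d > 0 : strict bound on perturbation sum
    have hsum : |y i - z i| + |y j - z j| < d := by
      rcases hεi.eq_or_lt with h | h
      · have := (hy i).2 h.symm
        rw [this]
        simp only [sub_self, abs_zero, zero_add]
        calc |y j - z j| ≤ epsDist r z j := hle j
          _ < d := by linarith
      · have h1 := (hy i).1 h
        have h2 := hle j
        linarith
    have htri : |(|y i - y j|) - (|z i - z j|)| ≤ |y i - z i| + |y j - z j| := by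
      calc |(|y i - y j|) - (|z i - z j|)| ≤ |(y i - y j) - (z i - z j)| :=
            abs_abs_sub_abs_le_abs_sub _ _
        _ = |(y i - z i) - (y j - z j)| := by ring_nf
        _ ≤ |y i - z i| + |y j - z j| := abs_sub _ _
    have h1 := (abs_le.1 htri).1
    have h2 := (abs_le.1 htri).2
    rcases le_or_gt (|z i - z j|) (B i j) with h | h
    · have hdv : d = B i j - |z i - z j| := by
        rw [hd, abs_of_nonpos (by linarith), neg_sub]
      constructor
      · intro _; exact h
      · intro _; linarith
    · have hdv : d = |z i - z j| - B i j := abs_of_pos (by linarith)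
      constructor
      · intro hyB; exfalso; linarith
      · intro hz; exact absurd hz h.not_ge
end

section
/- (Finite-time convergence to agreement.) If a trajectory x(t) of an SBC or SBI system converges to an agreement opinion vector ỹ, then x(t) = ỹ for all sufficiently large t, i.e., the trajectory reaches ỹ in finite time. -/
open Filter Matrix Finset

/-- Finite-time convergence to agreement: if a trajectory of an SBC
or SBI system converges to an agreement opinion vector `ỹ` (any two distinct
agents either in consensus or at distance exceeding both bounds), then the
trajectory reaches `ỹ` in finite time. -/
theorem stmt13 {n : ℕ} (r : Fin n → ℝ) (B : Fin n → Fin n → ℝ)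
    (hr : ∀ i, 0 < r i)
    (hB : (∀ i j, B i j = r i) ∨ (∀ i j, B i j = r j))
    (x : ℕ → Fin n → ℝ)
    (hstep : ∀ t, x (t + 1) = adjMat B (x t) *ᵥ x t)
    (ytil : Fin n → ℝ)
    (hagree : ∀ i j, i ≠ j → ytil i = ytil j ∨ max (r i) (r j) < |ytil i - ytil j|)
    (hconv : ∀ i, Tendsto (fun t => x t i) atTop (nhds (ytil i))) :
    ∃ T : ℕ, ∀ t ≥ T, x t = ytil := by
  rcases Nat.eq_zero_or_pos n with hn | hn
  · subst hn
    exact ⟨0, fun t _ => funext fun i => i.elim0⟩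
  have hne : (Finset.univ : Finset (Fin n)).Nonempty := ⟨⟨0, hn⟩, mem_univ _⟩
  have hne2 : (Finset.univ : Finset (Fin n × Fin n)).Nonempty :=
    ⟨(⟨0, hn⟩, ⟨0, hn⟩), mem_univ _⟩
  set m : ℝ := Finset.univ.inf' hne r with hm
  have hm_pos : 0 < m := by
    rw [hm, Finset.lt_inf'_iff]; exact fun i _ => hr i
  have hm_le : ∀ i, m ≤ r i := fun i => Finset.inf'_le _ (mem_univ i)
  set g : Fin n × Fin n → ℝ := fun p =>
    if ytil p.1 = ytil p.2 then m else |ytil p.1 - ytil p.2| - max (r p.1) (r p.2)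
    with hgdef
  have hg_pos : ∀ p, 0 < g p := by
    intro p
    by_cases h : ytil p.1 = ytil p.2
    · simp [hgdef, h, hm_pos]
    · have hne' : p.1 ≠ p.2 := fun e => h (by rw [e])
      rcases hagree p.1 p.2 hne' with h1 | h1
      · exact absurd h1 h
      · simp only [hgdef, if_neg h]
        linarith
  set ε : ℝ := (Finset.univ.inf' hne2 g) / 2 with hεdef
  have hε_pos : 0 < ε := by
    have : 0 < Finset.univ.inf' hne2 g := by
      rw [Finset.lt_inf'_iff]; exact fun p _ => hg_pos p
    rw [hεdef]; linarith
  have hε_le : ∀ p : Fin n × Fin n, 2 * ε ≤ g p := by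
    intro p
    have := Finset.inf'_le g (mem_univ p)
    rw [hεdef]; linarith
  have hBle : ∀ i j, B i j ≤ max (r i) (r j) ∧ m ≤ B i j := by
    intro i j
    rcases hB with h | h <;> rw [h i j]
    · exact ⟨le_max_left _ _, hm_le i⟩
    · exact ⟨le_max_right _ _, hm_le j⟩
  have hkey : ∀ z : Fin n → ℝ, (∀ k, |z k - ytil k| < ε) →
      ∀ i k, (|z i - z k| ≤ B i k ↔ ytil i = ytil k) := by
    intro z hz i k
    obtain ⟨hB1, hB2⟩ := hBle i k
    constructor
    · intro h
      by_contra hnek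
      have h2 := hε_le (i, k)
      have hgk : g (i, k) = |ytil i - ytil k| - max (r i) (r k) := by
        simp only [hgdef, if_neg hnek]
      rw [hgk] at h2
      have t1 : |ytil i - ytil k| ≤ |ytil i - z i| + |z i - ytil k| := abs_sub_le _ _ _
      have t2 : |z i - ytil k| ≤ |z i - z k| + |z k - ytil k| := abs_sub_le _ _ _
      have t3 : |ytil i - z i| = |z i - ytil i| := abs_sub_comm _ _
      have := hz i
      have := hz k
      linarith
    · intro h
      have h2 := hε_le (i, k)
      have hgk : g (i, k) = m := by simp only [hgdef, if_pos h]
      rw [hgk] at h2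
      have t1 : |z i - z k| ≤ |z i - ytil i| + |ytil i - z k| := abs_sub_le _ _ _
      have t2 : |ytil i - z k| = |z k - ytil k| := by rw [h, abs_sub_comm]
      have := hz i
      have := hz k
      linarith
  set S : Fin n → Finset (Fin n) := fun i => univ.filter (fun k => ytil i = ytil k)
    with hSdef
  have hiS : ∀ i, i ∈ S i := fun i => by simp [hSdef]
  have hScard : ∀ i, ((S i).card : ℝ) ≠ 0 := by
    intro i
    have : 0 < (S i).card := Finset.card_pos.mpr ⟨i, hiS i⟩
    exact_mod_cast this.ne'
  have hcomp : ∀ t, (∀ k, |x t k - ytil k| < ε) →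
      ∀ i, x (t + 1) i = ((S i).card : ℝ)⁻¹ * ∑ k ∈ S i, x t k := by
    intro t hcl i
    have hfilter : (univ.filter (fun k => |x t i - x t k| ≤ B i k)) = S i := by
      apply Finset.filter_congr
      intro k _
      simpa using hkey (x t) hcl i k
    rw [hstep t]
    simp only [Matrix.mulVec, dotProduct, adjMat, Matrix.of_apply]
    rw [Finset.mul_sum]
    rw [show (∑ k ∈ S i, ((S i).card : ℝ)⁻¹ * x t k) =
        ∑ j : Fin n, if ytil i = ytil j then ((S i).card : ℝ)⁻¹ * x t j else 0
      from Finset.sum_filter _ _]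
    apply Finset.sum_congr rfl
    intro j _
    rw [hfilter]
    by_cases h : ytil i = ytil j
    · rw [if_pos ((hkey (x t) hcl i j).mpr h), if_pos h]
    · rw [if_neg (fun hc => h ((hkey (x t) hcl i j).mp hc)), if_neg h, zero_mul]
  -- choose T0 with closeness for all t ≥ T0
  have hchoose : ∀ i, ∃ N : ℕ, ∀ t ≥ N, |x t i - ytil i| < ε := by
    intro i
    have := (Metric.tendsto_atTop.mp (hconv i)) ε hε_pos
    obtain ⟨N, hN⟩ := this
    exact ⟨N, fun t ht => by simpa [Real.dist_eq] using hN t ht⟩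
  choose N hN using hchoose
  set T0 : ℕ := Finset.univ.sup N with hT0
  have hclose : ∀ t ≥ T0, ∀ k, |x t k - ytil k| < ε := by
    intro t ht k
    exact hN k t (le_trans (Finset.le_sup (mem_univ k)) ht)
  have hconst : ∀ i j, ytil i = ytil j → x (T0 + 1) i = x (T0 + 1) j := by
    intro i j h
    have hSij : S j = S i := by
      ext k
      simp [hSdef, h]
    rw [hcomp T0 (hclose T0 le_rfl) i, hcomp T0 (hclose T0 le_rfl) j, hSij]
  have hstable : ∀ s : ℕ, x (T0 + 1 + s) = x (T0 + 1) := by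
    intro s
    induction s with
    | zero => rfl
    | succ s ih =>
      funext i
      have hcl' : ∀ k, |x (T0 + 1 + s) k - ytil k| < ε := hclose _ (by omega)
      have hc := hcomp (T0 + 1 + s) hcl' i
      rw [show T0 + 1 + (s + 1) = (T0 + 1 + s) + 1 from by ring, hc, ih]
      have hsum : ∑ k ∈ S i, x (T0 + 1) k = ((S i).card : ℝ) * x (T0 + 1) i := by
        have heq : ∀ k ∈ S i, x (T0 + 1) k = x (T0 + 1) i := by
          intro k hk
          have hy : ytil i = ytil k := by
            simpa [hSdef] using (Finset.mem_filter.mp hk).2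
          exact (hconst i k hy).symm
        rw [Finset.sum_congr rfl heq, Finset.sum_const, nsmul_eq_mul]
      rw [hsum, ← mul_assoc, inv_mul_cancel₀ (hScard i), one_mul]
  have hfix : ∀ i, x (T0 + 1) i = ytil i := by
    intro i
    have hT : Tendsto (fun t => x t i) atTop (nhds (x (T0 + 1) i)) := by
      have hev : (fun t => x t i) =ᶠ[atTop] (fun _ => x (T0 + 1) i) := by
        filter_upwards [eventually_ge_atTop (T0 + 1)] with t ht
        have h2 := hstable (t - (T0 + 1))
        rw [show T0 + 1 + (t - (T0 + 1)) = t from by omega] at h2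
        exact congrFun h2 i
      exact (tendsto_congr' hev).mpr tendsto_const_nhds
    exact tendsto_nhds_unique hT (hconv i)
  refine ⟨T0 + 1, fun t ht => ?_⟩
  funext i
  have := hstable (t - (T0 + 1))
  rw [show T0 + 1 + (t - (T0 + 1)) = t from by omega] at this
  rw [this]
  exact hfix i
end

section
/- (Equilibria contain only consensus or isolated average-fixed configurations in complete components.) If z is an equilibrium opinion vector (z = A(z)z) of an SBC or SBI system and i belongs to a closed-minded component K of G_r(z) (a sink SCC whose subgraph is complete), then all agents in K hold the same opinion: z_i = z_j for all i, j ∈ K. -/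
open Filter Matrix Finset

/-- If `z` is an equilibrium opinion vector of an SBC or SBI system
(`A(z) z = z`) and `K` is a closed-minded component of `G_r(z)` — a sink SCC whose
induced subgraph is complete — then all agents of `K` hold the same opinion. -/
theorem stmt19 {n : ℕ} (r : Fin n → ℝ) (B : Fin n → Fin n → ℝ) (z : Fin n → ℝ)
    (hr : ∀ i, 0 < r i)
    (hB : (∀ i j, B i j = r i) ∨ (∀ i j, B i j = r j))
    (heq : adjMat B z *ᵥ z = z)
    (K : Finset (Fin n))
    (hcomplete : ∀ i ∈ K, ∀ j ∈ K, |z i - z j| ≤ B i j)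
    (hsink : ∀ i ∈ K, ∀ j, |z i - z j| ≤ B i j → j ∈ K) :
    ∀ i ∈ K, ∀ j ∈ K, z i = z j := by
  -- For each i ∈ K, the neighbor set equals K.
  have hfilt : ∀ i ∈ K,
      (Finset.univ.filter (fun k => |z i - z k| ≤ B i k)) = K := by
    intro i hi
    ext k
    simp only [Finset.mem_filter, Finset.mem_univ, true_and]
    constructor
    · exact hsink i hi k
    · exact fun hk => hcomplete i hi k hk
  -- Hence for each i ∈ K, z i equals the average of z over K.
  have hval : ∀ i ∈ K, z i = ((K.card : ℝ))⁻¹ * ∑ j ∈ K, z j := by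
    intro i hi
    have h := congrFun heq i
    rw [← h]
    simp only [Matrix.mulVec, dotProduct, adjMat, Matrix.of_apply]
    rw [hfilt i hi]
    rw [← Finset.sum_filter_add_sum_filter_not Finset.univ
      (fun j => |z i - z j| ≤ B i j) (fun j => (if |z i - z j| ≤ B i j then
        ((K.card : ℝ))⁻¹ else 0) * z j)]
    have h1 : ∑ j ∈ Finset.univ.filter (fun j => |z i - z j| ≤ B i j),
        (if |z i - z j| ≤ B i j then ((K.card : ℝ))⁻¹ else 0) * z j
        = ∑ j ∈ K, ((K.card : ℝ))⁻¹ * z j := by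
      rw [hfilt i hi]
      refine Finset.sum_congr rfl fun j hj => ?_
      rw [if_pos (hcomplete i hi j hj)]
    have h2 : ∑ j ∈ Finset.univ.filter (fun j => ¬ |z i - z j| ≤ B i j),
        (if |z i - z j| ≤ B i j then ((K.card : ℝ))⁻¹ else 0) * z j = 0 := by
      refine Finset.sum_eq_zero fun j hj => ?_
      rw [Finset.mem_filter] at hj
      rw [if_neg hj.2, zero_mul]
    rw [h1, h2, add_zero, Finset.mul_sum]
  intro i hi j hj
  rw [hval i hi, hval j hj]
end
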